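/- arXiv:math/0503171 — 7 statements merged into one kernel-verified Lean document; each statement's English description precedes it below -/
import Mathlib

section
/- For every b ≥ 0 and every y ≥ 0, the integral ∫₀^y (1 + log((1+y)/(1+x)))^b dx is at most C(b)·y, where C(b) is a constant depending only on b. -/
/-!
A power of a logarithm is dominated by any positive power: for `t ≥ 1`,
`(1 + log t) ^ b ≤ A t ^ (1/2)`, which follows from `u ≤ K e^{u/K}` with `u = 1 + log t`.
Applied to `t = (1 + y) / (1 + x)` this reduces the claim to
`∫₀^y ((1 + y) / (1 + x)) ^ (1/2) dx = 2 ((1 + y) - (1 + y) ^ (1/2)) ≤ 2 y`.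
-/

open MeasureTheory

open Real

namespace Real

theorem rpow_le_mul_exp_mul {b ε u : ℝ} (hb : 0 ≤ b) (hε : 0 < ε) (hu : 0 ≤ u) :
    u ^ b ≤ (b / ε + 1) ^ b * exp (ε * u) := by
  set K := b / ε + 1
  have hK : 0 < K := by positivity
  have hu_le : u ≤ K * exp (u / K) := by
    have := add_one_le_exp (u / K)
    rw [← div_le_iff₀' hK]
    linarith
  have hbK : b / K ≤ ε := by
    rw [div_le_iff₀ hK]
    simp only [K, mul_add, mul_div_cancel₀ b hε.ne', mul_one, le_add_iff_nonneg_right, hε.le]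
  calc u ^ b ≤ (K * exp (u / K)) ^ b := rpow_le_rpow hu hu_le hb
    _ = K ^ b * exp (b / K * u) := by
      rw [mul_rpow hK.le (exp_pos _).le, ← exp_mul]
      ring_nf
    _ ≤ K ^ b * exp (ε * u) := by gcongr

theorem one_add_log_rpow_le {b ε t : ℝ} (hb : 0 ≤ b) (hε : 0 < ε) (ht : 1 ≤ t) :
    (1 + log t) ^ b ≤ (b / ε + 1) ^ b * exp ε * t ^ ε := by
  have hlog : 0 ≤ 1 + log t := by linarith [log_nonneg ht]
  calc (1 + log t) ^ b ≤ (b / ε + 1) ^ b * exp (ε * (1 + log t)) :=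
        rpow_le_mul_exp_mul hb hε hlog
    _ = (b / ε + 1) ^ b * exp ε * t ^ ε := by
      rw [rpow_def_of_pos (by linarith : 0 < t) ε, mul_add, mul_one, exp_add, mul_comm ε,
        mul_assoc]

end Real

theorem integral_one_add_rpow_neg {p : ℝ} (hp : p < 1) (y : ℝ) :
    ∫ x in (0:ℝ)..y, (1 + x) ^ (-p) = ((1 + y) ^ (1 - p) - 1) / (1 - p) := by
  rw [intervalIntegral.integral_comp_add_left (fun x => x ^ (-p)),
    integral_rpow (by left; linarith), add_zero, one_rpow, neg_add_eq_sub]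

theorem intervalIntegrable_div_rpow {p y : ℝ} (hp : 0 ≤ p) (hy : 0 ≤ y) :
    IntervalIntegrable (fun x : ℝ => ((1 + y) / (1 + x)) ^ p) volume 0 y := by
  refine (ContinuousOn.rpow_const ?_ fun _ _ => Or.inr hp).intervalIntegrable
  refine continuousOn_const.div (by fun_prop) fun x hx => ?_
  rw [Set.uIcc_of_le hy] at hx
  linarith [hx.1]

theorem integral_div_rpow_le {p y : ℝ} (hp0 : 0 ≤ p) (hp1 : p < 1) (hy : 0 ≤ y) :
    ∫ x in (0:ℝ)..y, ((1 + y) / (1 + x)) ^ p ≤ y / (1 - p) := by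
  have hy1 : 0 < 1 + y := by linarith
  have hsplit : ∀ x ∈ Set.uIcc (0:ℝ) y,
      ((1 + y) / (1 + x)) ^ p = (1 + y) ^ p * (1 + x) ^ (-p) := by
    intro x hx
    rw [Set.uIcc_of_le hy] at hx
    rw [div_rpow hy1.le (by linarith [hx.1]), rpow_neg (by linarith [hx.1]), div_eq_mul_inv]
  rw [intervalIntegral.integral_congr hsplit, intervalIntegral.integral_const_mul,
    integral_one_add_rpow_neg hp1, mul_div_assoc', mul_sub, ← rpow_add hy1, mul_one,
    add_sub_cancel, rpow_one]
  gcongr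
  linarith [one_le_rpow (by linarith : (1:ℝ) ≤ 1 + y) hp0]

theorem stmt0 (b : ℝ) (hb : 0 ≤ b) :
    ∃ C : ℝ, 0 < C ∧ ∀ y : ℝ, 0 ≤ y →
      (∫ x in (0:ℝ)..y, (1 + Real.log ((1 + y) / (1 + x))) ^ b) ≤ C * y := by
  set A := (b / (1 / 2) + 1) ^ b * exp (1 / 2)
  refine ⟨2 * A, by positivity, fun y hy => ?_⟩
  have hratio : ∀ x ∈ Set.Ioc 0 y, 1 ≤ (1 + y) / (1 + x) := fun x hx => by
    rw [le_div_iff₀ (by linarith [hx.1])]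
    linarith [hx.2]
  have hbound : (∫ x in (0:ℝ)..y, (1 + Real.log ((1 + y) / (1 + x))) ^ b)
      ≤ ∫ x in (0:ℝ)..y, A * ((1 + y) / (1 + x)) ^ (1 / 2 : ℝ) := by
    rw [intervalIntegral.integral_of_le hy, intervalIntegral.integral_of_le hy]
    -- nonnegativity of the left integrand spares us proving its integrability
    refine integral_mono_of_nonneg
      (ae_restrict_of_forall_mem measurableSet_Ioc fun x hx => rpow_nonneg ?_ _)
      ((intervalIntegrable_div_rpow (by norm_num) hy).const_mul A).1
      (ae_restrict_of_forall_mem measurableSet_Ioc fun x hx => ?_)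
    · linarith [log_nonneg (hratio x hx)]
    · exact one_add_log_rpow_le hb (by norm_num) (hratio x hx)
  calc _ ≤ ∫ x in (0:ℝ)..y, A * ((1 + y) / (1 + x)) ^ (1 / 2 : ℝ) := hbound
    _ ≤ A * (y / (1 - 1 / 2)) := by
      rw [intervalIntegral.integral_const_mul]
      gcongr
      exact integral_div_rpow_le (by norm_num) (by norm_num) hy
    _ = 2 * A * y := by ring
end

section
/- Let κ > 2, 0 ≤ ν < 1, and b ≥ 0. Then there is a constant C = C(κ, ν, b) such that for all y ≥ 0, ∫_{-y}^{y} (1+|x+y|)^{1-κ} · (1+|x|)^{-ν} · (1 + log((1+y)/(1+|x|)))^b dx ≤ C·(1+y)^{-ν}. -/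
/-!
Split `[-y, y]` at `-y / 2`, writing `⟨z⟩ = 1 + |z|`. On `[-y, -y / 2]` we have `⟨y⟩ ≤ 2⟨x⟩`, so
the last two factors are `O(⟨y⟩^(-ν))`, while `⟨x + y⟩^(1 - κ)` has integral at most `1 / (κ - 2)`.
On `[-y / 2, y]` we have `⟨y⟩ ≤ 2⟨x + y⟩`, so the first factor is `O(⟨y⟩^(1 - κ))`; the logarithm
is absorbed as `O(⟨y⟩^(κ - 2))`, and `⟨x⟩^(-ν)` has integral `O(⟨y⟩^(1 - ν))` because `ν < 1`.
-/

open Real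

lemma one_add_log_rpow_le_mul_rpow {b c : ℝ} (hb : 0 ≤ b) (hc : 0 < c) :
    ∃ D, 0 < D ∧ ∀ t, 1 ≤ t → (1 + log t) ^ b ≤ D * t ^ c := by
  set e := c / (b + 1)
  have he : 0 < e := by positivity
  refine ⟨(1 + 1 / e) ^ b, by positivity, fun t ht => ?_⟩
  have ht0 : 0 ≤ t := by linarith
  have hte : 1 ≤ t ^ e := one_le_rpow ht he.le
  have hlin : 1 + log t ≤ (1 + 1 / e) * t ^ e := by
    have := log_le_rpow_div ht0 he
    rw [add_mul, one_mul, one_div_mul_eq_div]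
    linarith
  have heb : e * b ≤ c := by
    rw [div_mul_eq_mul_div, div_le_iff₀ (by linarith)]
    nlinarith
  calc (1 + log t) ^ b ≤ ((1 + 1 / e) * t ^ e) ^ b :=
        rpow_le_rpow (by linarith [log_nonneg ht]) hlin hb
    _ = (1 + 1 / e) ^ b * t ^ (e * b) := by
        rw [mul_rpow (by positivity) (by positivity), ← rpow_mul ht0]
    _ ≤ (1 + 1 / e) ^ b * t ^ c := by gcongr

lemma integral_one_add_abs_rpow {r T : ℝ} (hr : r ≠ -1) (hT : 0 ≤ T) :
    ∫ x in (0 : ℝ)..T, (1 + |x|) ^ r = ((1 + T) ^ (r + 1) - 1) / (r + 1) := by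
  have hnot : (0 : ℝ) ∉ Set.uIcc 1 (1 + T) := fun h => by
    rw [Set.uIcc_of_le (by linarith)] at h; linarith [h.1]
  calc ∫ x in (0 : ℝ)..T, (1 + |x|) ^ r = ∫ x in (0 : ℝ)..T, (x + 1) ^ r :=
        intervalIntegral.integral_congr fun x hx => by
          rw [Set.uIcc_of_le hT] at hx; rw [abs_of_nonneg hx.1, add_comm]
    _ = ((1 + T) ^ (r + 1) - 1) / (r + 1) := by
        rw [intervalIntegral.integral_comp_add_right (· ^ r), zero_add, add_comm T,
          integral_rpow (Or.inr ⟨hr, hnot⟩), one_rpow]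

lemma integral_one_add_abs_rpow_le_of_lt_neg_one {r T : ℝ} (hr : r < -1) (hT : 0 ≤ T) :
    ∫ x in (0 : ℝ)..T, (1 + |x|) ^ r ≤ 1 / (-r - 1) := by
  rw [integral_one_add_abs_rpow hr.ne hT, ← neg_div_neg_eq, neg_sub, neg_add']
  have : 0 ≤ (1 + T) ^ (r + 1) := by positivity
  gcongr
  · linarith
  · linarith

lemma integral_one_add_abs_rpow_le_of_neg_one_lt {r T S : ℝ} (hr : -1 < r) (hT : 0 ≤ T)
    (hTS : T ≤ S) : ∫ x in (0 : ℝ)..T, (1 + |x|) ^ r ≤ (1 + S) ^ (r + 1) / (r + 1) := by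
  rw [integral_one_add_abs_rpow hr.ne' hT]
  have : (1 + T) ^ (r + 1) ≤ (1 + S) ^ (r + 1) := by gcongr; linarith
  exact div_le_div_of_nonneg_right (by linarith) (by linarith)

lemma continuous_one_add_abs_rpow (r : ℝ) : Continuous fun x : ℝ => (1 + |x|) ^ r :=
  (continuous_const.add continuous_abs).rpow_const fun x => Or.inl (by positivity : 0 < 1 + |x|).ne'

lemma integral_one_add_abs_rpow_le_of_mem {r a b T : ℝ} (hr : -1 < r) (ha : -T ≤ a) (ha0 : a ≤ 0)
    (hb0 : 0 ≤ b) (hbT : b ≤ T) :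
    ∫ x in a..b, (1 + |x|) ^ r ≤ 2 * ((1 + T) ^ (r + 1) / (r + 1)) := by
  have hcont := continuous_one_add_abs_rpow r
  have hreflect : ∫ x in a..0, (1 + |x|) ^ r = ∫ x in (0 : ℝ)..-a, (1 + |x|) ^ r := by
    simpa only [abs_neg, neg_zero, neg_neg] using
      (intervalIntegral.integral_comp_neg (a := 0) (b := -a) fun x => (1 + |x|) ^ r).symm
  rw [← intervalIntegral.integral_add_adjacent_intervals (b := 0) (hcont.intervalIntegrable _ _)
    (hcont.intervalIntegrable _ _), hreflect, two_mul]
  gcongr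
  · exact integral_one_add_abs_rpow_le_of_neg_one_lt hr (by linarith) (by linarith)
  · exact integral_one_add_abs_rpow_le_of_neg_one_lt hr hb0 hbT

lemma rpow_le_two_rpow_neg_mul_rpow {a x r : ℝ} (hr : r ≤ 0) (ha : 0 < a) (hax : a ≤ 2 * x) :
    x ^ r ≤ 2 ^ (-r) * a ^ r :=
  calc x ^ r ≤ (a / 2) ^ r := rpow_le_rpow_of_nonpos (by positivity) (by linarith) hr
    _ = 2 ^ (-r) * a ^ r := by
      rw [div_rpow ha.le zero_le_two, rpow_neg zero_le_two, div_eq_inv_mul]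

lemma one_add_log_rpow_le_one_add_log_rpow {u s b : ℝ} (hb : 0 ≤ b) (hu : 1 ≤ u) (hus : u ≤ s) :
    (1 + log u) ^ b ≤ (1 + log s) ^ b :=
  rpow_le_rpow (by linarith [log_nonneg hu]) (by linarith [log_le_log (by linarith) hus]) hb

noncomputable def decayIntegrand (κ ν b y x : ℝ) : ℝ :=
  (1 + |x + y|) ^ (1 - κ) * (1 + |x|) ^ (-ν) * (1 + log ((1 + y) / (1 + |x|))) ^ b

section decayIntegrand

variable {κ ν b x y : ℝ}

lemma continuous_decayIntegrand (κ ν : ℝ) (hb : 0 ≤ b) (hy : 0 ≤ y) :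
    Continuous (decayIntegrand κ ν b y) := by
  unfold decayIntegrand
  refine .mul (.mul ((continuous_one_add_abs_rpow _).comp (continuous_add_const y))
    (continuous_one_add_abs_rpow _)) ?_
  have hratio : Continuous fun x : ℝ => (1 + y) / (1 + |x|) :=
      continuous_const.div (by fun_prop) fun x => (by positivity : (0 : ℝ) < 1 + |x|).ne'
  exact (continuous_const.add (hratio.log fun x => by positivity)).rpow_const
    fun _ => Or.inr hb

lemma one_le_div_one_add_abs (hx : |x| ≤ y) : 1 ≤ (1 + y) / (1 + |x|) := by
  rw [one_le_div (by positivity : (0 : ℝ) < 1 + |x|)]; linarith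

lemma integral_decayIntegrand_le_of_far (hκ : 2 < κ) (hν : 0 ≤ ν) (hb : 0 ≤ b) (hy : 0 ≤ y) :
    ∫ x in -y..-y / 2, decayIntegrand κ ν b y x ≤
      2 ^ ν * (1 + log 2) ^ b / (κ - 2) * (1 + y) ^ (-ν) := by
  have hpointwise : ∀ x ∈ Set.Icc (-y) (-y / 2), decayIntegrand κ ν b y x ≤
      (1 + |x + y|) ^ (1 - κ) * (2 ^ ν * (1 + y) ^ (-ν) * (1 + log 2) ^ b) := by
    rintro x ⟨hx₁, hx₂⟩
    have habs : |x| = -x := abs_of_nonpos (by linarith)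
    have hratio := one_le_div_one_add_abs (x := x) (y := y) (by rw [habs]; linarith)
    have hdecay : (1 + |x|) ^ (-ν) ≤ 2 ^ ν * (1 + y) ^ (-ν) := by
      simpa only [neg_neg] using
        rpow_le_two_rpow_neg_mul_rpow (neg_nonpos.mpr hν) (by linarith) (by rw [habs]; linarith)
    have hlog : (1 + log ((1 + y) / (1 + |x|))) ^ b ≤ (1 + log 2) ^ b :=
      one_add_log_rpow_le_one_add_log_rpow hb hratio
        (by rw [div_le_iff₀ (by positivity), habs]; linarith)
    rw [decayIntegrand, mul_assoc]
    gcongr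
    exact rpow_nonneg (by linarith [log_nonneg hratio]) _
  have htail := integral_one_add_abs_rpow_le_of_lt_neg_one (r := 1 - κ) (T := y / 2)
    (by linarith) (by linarith)
  rw [show -(1 - κ) - 1 = κ - 2 by ring] at htail
  calc ∫ x in -y..-y / 2, decayIntegrand κ ν b y x
      ≤ ∫ x in -y..-y / 2,
          (1 + |x + y|) ^ (1 - κ) * (2 ^ ν * (1 + y) ^ (-ν) * (1 + log 2) ^ b) :=
        intervalIntegral.integral_mono_on (by linarith)
          ((continuous_decayIntegrand κ ν hb hy).intervalIntegrable _ _)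
          ((((continuous_one_add_abs_rpow _).comp (continuous_add_const y)).mul
            continuous_const).intervalIntegrable _ _) hpointwise
    _ = (∫ x in (0 : ℝ)..y / 2, (1 + |x|) ^ (1 - κ)) *
          (2 ^ ν * (1 + y) ^ (-ν) * (1 + log 2) ^ b) := by
        rw [intervalIntegral.integral_mul_const,
          intervalIntegral.integral_comp_add_right (fun x => (1 + |x|) ^ (1 - κ))]
        congr 3 <;> ring
    _ ≤ 1 / (κ - 2) * (2 ^ ν * (1 + y) ^ (-ν) * (1 + log 2) ^ b) := by
        gcongr
    _ = 2 ^ ν * (1 + log 2) ^ b / (κ - 2) * (1 + y) ^ (-ν) := by ring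

lemma integral_decayIntegrand_le_of_near (hκ : 2 < κ) (hν : ν < 1) (hb : 0 ≤ b) (hy : 0 ≤ y)
    {D : ℝ} (hD : ∀ t, 1 ≤ t → (1 + log t) ^ b ≤ D * t ^ (κ - 2)) :
    ∫ x in -y / 2..y, decayIntegrand κ ν b y x ≤ 2 ^ κ * D / (1 - ν) * (1 + y) ^ (-ν) := by
  have hpointwise : ∀ x ∈ Set.Icc (-y / 2) y, decayIntegrand κ ν b y x ≤
      2 ^ (κ - 1) * (1 + y) ^ (1 - κ) * (1 + |x|) ^ (-ν) * (D * (1 + y) ^ (κ - 2)) := by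
    rintro x ⟨hx₁, hx₂⟩
    have hxy : |x| ≤ y := abs_le.mpr ⟨by linarith, hx₂⟩
    have hratio := one_le_div_one_add_abs hxy
    have hdecay : (1 + |x + y|) ^ (1 - κ) ≤ 2 ^ (κ - 1) * (1 + y) ^ (1 - κ) := by
      simpa only [neg_sub] using rpow_le_two_rpow_neg_mul_rpow (by linarith : 1 - κ ≤ 0)
        (by linarith) (by rw [abs_of_nonneg (by linarith : 0 ≤ x + y)]; linarith)
    have hlog : (1 + log ((1 + y) / (1 + |x|))) ^ b ≤ D * (1 + y) ^ (κ - 2) :=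
      (one_add_log_rpow_le_one_add_log_rpow hb hratio
        (div_le_self (by positivity) (by linarith [abs_nonneg x]))).trans (hD _ (by linarith))
    rw [decayIntegrand]
    gcongr
    exact rpow_nonneg (by linarith [log_nonneg hratio]) _
  have hbulk := integral_one_add_abs_rpow_le_of_mem (r := -ν) (a := -y / 2) (b := y) (T := y)
    (by linarith) (by linarith) (by linarith) hy le_rfl
  rw [neg_add_eq_sub] at hbulk
  have hpow : (1 + y) ^ (1 - κ) * (1 + y) ^ (1 - ν) * (1 + y) ^ (κ - 2) = (1 + y) ^ (-ν) := by
    rw [← rpow_add (by linarith), ← rpow_add (by linarith)]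
    ring_nf
  have htwo : (2 : ℝ) ^ (κ - 1) * 2 = 2 ^ κ := by
    rw [rpow_sub_one two_ne_zero, div_mul_cancel₀ _ two_ne_zero]
  calc ∫ x in -y / 2..y, decayIntegrand κ ν b y x
      ≤ ∫ x in -y / 2..y,
          2 ^ (κ - 1) * (1 + y) ^ (1 - κ) * (1 + |x|) ^ (-ν) * (D * (1 + y) ^ (κ - 2)) :=
        intervalIntegral.integral_mono_on (by linarith)
          ((continuous_decayIntegrand κ ν hb hy).intervalIntegrable _ _)
          (((continuous_const.mul (continuous_one_add_abs_rpow _)).mul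
            continuous_const).intervalIntegrable _ _) hpointwise
    _ = 2 ^ (κ - 1) * (1 + y) ^ (1 - κ) * (∫ x in -y / 2..y, (1 + |x|) ^ (-ν)) *
          (D * (1 + y) ^ (κ - 2)) := by
        rw [intervalIntegral.integral_mul_const, intervalIntegral.integral_const_mul]
    _ ≤ 2 ^ (κ - 1) * (1 + y) ^ (1 - κ) * (2 * ((1 + y) ^ (1 - ν) / (1 - ν))) *
          (D * (1 + y) ^ (κ - 2)) := by
        have : 0 ≤ D := zero_le_one.trans (by simpa using hD 1 le_rfl)
        gcongr
    _ = 2 ^ (κ - 1) * 2 * D / (1 - ν) *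
          ((1 + y) ^ (1 - κ) * (1 + y) ^ (1 - ν) * (1 + y) ^ (κ - 2)) := by ring
    _ = 2 ^ κ * D / (1 - ν) * (1 + y) ^ (-ν) := by rw [htwo, hpow]

end decayIntegrand

theorem stmt1 (κ ν b : ℝ) (hκ : 2 < κ) (hν0 : 0 ≤ ν) (hν1 : ν < 1) (hb : 0 ≤ b) :
    ∃ C : ℝ, 0 < C ∧ ∀ y : ℝ, 0 ≤ y →
      (∫ x in (-y)..y,
          (1 + |x + y|) ^ (1 - κ) * (1 + |x|) ^ (-ν) *
            (1 + Real.log ((1 + y) / (1 + |x|))) ^ b) ≤ C * (1 + y) ^ (-ν) := by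
  have hκ2 : 0 < κ - 2 := by linarith
  obtain ⟨D, hD0, hD⟩ := one_add_log_rpow_le_mul_rpow hb hκ2
  have hν : 0 < 1 - ν := by linarith
  refine ⟨2 ^ ν * (1 + log 2) ^ b / (κ - 2) + 2 ^ κ * D / (1 - ν), by positivity,
    fun y hy => ?_⟩
  have hcont := continuous_decayIntegrand κ ν hb hy
  calc ∫ x in -y..y, decayIntegrand κ ν b y x
      = (∫ x in -y..-y / 2, decayIntegrand κ ν b y x) +
          ∫ x in -y / 2..y, decayIntegrand κ ν b y x :=
        (intervalIntegral.integral_add_adjacent_intervals (hcont.intervalIntegrable _ _)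
          (hcont.intervalIntegrable _ _)).symm
    _ ≤ 2 ^ ν * (1 + log 2) ^ b / (κ - 2) * (1 + y) ^ (-ν) +
          2 ^ κ * D / (1 - ν) * (1 + y) ^ (-ν) :=
        add_le_add (integral_decayIntegrand_le_of_far hκ hν0 hb hy)
          (integral_decayIntegrand_le_of_near hκ hν1 hb hy hD)
    _ = _ := by ring
end

section
/- Let a > 0 and b be real numbers with b > -a. Then there exists a constant C = C(a,b) such that for all r, t > 0: ∫_{|t-r|}^{t+r} (1+λ)^b / (r - t + λ)^{1-a} dλ ≤ C · r^a · (1+t+r)^b. -/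
/-!
Write `m = min b 0` and `u = r - t + λ ∈ (0, 2r]`. On the range of integration
`(1 + t + r) u ≤ 4 r (1 + λ) ≤ 4 r (1 + t + r)`, so `(1 + λ)^b ≤ (1 + t + r)^b (u / 4r)^m`.
The integrand is therefore at most `(1 + t + r)^b (4r)^(-m) u^(m + a - 1)`, and since
`a + m > 0` the remaining integral is at most `(2r)^(a + m) / (a + m)`, which gives the
bound with `C = 4^(-m) 2^(a + m) / (a + m)`.
-/

open MeasureTheory

lemma one_add_add_mul_le_four_mul {r t l : ℝ} (hl : |t - r| ≤ l) (hl' : l ≤ t + r) :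
    (1 + t + r) * (r - t + l) ≤ 4 * r * (1 + l) := by
  obtain ⟨h₁, h₂⟩ := abs_le.mp hl
  -- with `u = r - t + l ≤ 2r` and `u ≤ 2l`: `(1 + t + r) u = (1 + l) u + (2r - u) u`
  nlinarith

lemma Real.rpow_le_rpow_mul_rpow_min {x X s : ℝ} (hX : 0 < X) (hs : 0 < s) (hsx : X * s ≤ x)
    (hxX : x ≤ X) (b : ℝ) : x ^ b ≤ X ^ b * s ^ min b 0 := by
  have hx : 0 < x := (mul_pos hX hs).trans_le hsx
  have hsx' : s ≤ x / X := by rwa [le_div_iff₀' hX]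
  have hx1 : x / X ≤ 1 := (div_le_one hX).mpr hxX
  calc x ^ b = X ^ b * (x / X) ^ b := by
        rw [Real.div_rpow hx.le hX.le, mul_div_cancel₀ _ (Real.rpow_pos_of_pos hX b).ne']
    _ ≤ X ^ b * s ^ min b 0 := by
        gcongr
        calc (x / X) ^ b ≤ (x / X) ^ min b 0 :=
              Real.rpow_le_rpow_of_exponent_ge (by positivity) hx1 (min_le_left b 0)
          _ ≤ s ^ min b 0 := Real.rpow_le_rpow_of_nonpos hs hsx' (min_le_right b 0)

lemma integral_add_rpow_le {c α β p : ℝ} (hp : -1 < p) (hα : 0 ≤ c + α) :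
    ∫ x in α..β, (c + x) ^ p ≤ (c + β) ^ (p + 1) / (p + 1) := by
  rw [intervalIntegral.integral_comp_add_left (fun x => x ^ p), integral_rpow (Or.inl hp)]
  have : 0 ≤ (c + α) ^ (p + 1) := Real.rpow_nonneg hα _
  gcongr
  · linarith
  · linarith

lemma one_add_rpow_div_rpow_le {a b r t l : ℝ} (hr : 0 < r) (hl : |t - r| < l)
    (hl' : l ≤ t + r) :
    (1 + l) ^ b / (r - t + l) ^ (1 - a) ≤
      (1 + t + r) ^ b * (4 * r) ^ (-min b 0) * (r - t + l) ^ (min b 0 + a - 1) := by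
  obtain ⟨h₁, h₂⟩ := abs_lt.mp hl
  have hu : 0 < r - t + l := by linarith
  have key := Real.rpow_le_rpow_mul_rpow_min (x := 1 + l) (X := 1 + t + r)
    (s := (r - t + l) / (4 * r)) (by linarith) (by positivity)
    (by rw [mul_div_assoc', div_le_iff₀ (by positivity)]
        linarith [one_add_add_mul_le_four_mul hl.le hl'])
    (by linarith) b
  calc (1 + l) ^ b / (r - t + l) ^ (1 - a)
      ≤ (1 + t + r) ^ b * ((r - t + l) / (4 * r)) ^ min b 0 / (r - t + l) ^ (1 - a) := by
        gcongr
    _ = (1 + t + r) ^ b * (4 * r) ^ (-min b 0) * (r - t + l) ^ (min b 0 + a - 1) := by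
        rw [Real.div_rpow hu.le (by positivity), Real.rpow_neg (by positivity),
          show min b 0 + a - 1 = min b 0 - (1 - a) by ring, Real.rpow_sub hu (min b 0) (1 - a)]
        ring

theorem stmt2 (a b : ℝ) (ha : 0 < a) (hb : -a < b) :
    ∃ C : ℝ, 0 < C ∧ ∀ r t : ℝ, 0 < r → 0 < t →
      (∫ l in |t - r|..(t + r), (1 + l) ^ b / (r - t + l) ^ (1 - a)) ≤
        C * r ^ a * (1 + t + r) ^ b := by
  set m := min b 0
  have hm : 0 < a + m := by linarith [show -a < m from lt_min hb (by linarith)]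
  refine ⟨4 ^ (-m) * 2 ^ (a + m) / (a + m), by positivity, fun r t hr _ => ?_⟩
  have hd : |t - r| ≤ t + r := abs_sub_le_iff.mpr ⟨by linarith, by linarith⟩
  have hp : -1 < m + a - 1 := by linarith
  have hdom : IntervalIntegrable (fun l => (r - t + l) ^ (m + a - 1)) volume |t - r| (t + r) := by
    simpa using (intervalIntegral.intervalIntegrable_rpow' hp (a := r - t + |t - r|)
      (b := r - t + (t + r))).comp_add_left (r - t)
  calc (∫ l in |t - r|..(t + r), (1 + l) ^ b / (r - t + l) ^ (1 - a))
      ≤ ∫ l in |t - r|..(t + r), (1 + t + r) ^ b * (4 * r) ^ (-m) * (r - t + l) ^ (m + a - 1) := by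
        rw [intervalIntegral.integral_of_le hd, intervalIntegral.integral_of_le hd]
        refine setIntegral_mono_of_nonneg (fun l hl => ?_)
          (fun l hl => one_add_rpow_div_rpow_le hr hl.1 hl.2) (hdom.const_mul _).1
        have : 0 ≤ r - t + l := by linarith [le_abs_self (t - r), hl.1]
        have : 0 ≤ 1 + l := by linarith [abs_nonneg (t - r), hl.1]
        positivity
    _ = (1 + t + r) ^ b * (4 * r) ^ (-m) * ∫ l in |t - r|..(t + r), (r - t + l) ^ (m + a - 1) :=
        intervalIntegral.integral_const_mul _ _
    _ ≤ (1 + t + r) ^ b * (4 * r) ^ (-m) * ((2 * r) ^ (a + m) / (a + m)) := by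
        gcongr
        refine (integral_add_rpow_le hp (by linarith [le_abs_self (t - r)])).trans_eq ?_
        rw [show r - t + (t + r) = 2 * r by ring, show m + a - 1 + 1 = a + m by ring]
    _ = 4 ^ (-m) * 2 ^ (a + m) / (a + m) * r ^ a * (1 + t + r) ^ b := by
        rw [Real.mul_rpow (by norm_num) hr.le, Real.mul_rpow (by norm_num) hr.le]
        have : r ^ (-m) * r ^ (a + m) = r ^ a := by rw [← Real.rpow_add hr]; ring_nf
        rw [← this]; ring
end

section
/- Let a > 0 and b be real numbers with b < -a. Then there exists a constant C = C(a,b) such that for all r, t > 0: ∫_{|t-r|}^{t+r} (1+λ)^b / (r - t + λ)^{1-a} dλ ≤ C · r^a · (1+t+r)^{-a} · (1+|t-r|)^{a+b}. -/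
/-!
Write `c = t - r`, so the integrand is `(1 + λ)^b (λ - c)^(a - 1)` on `[|c|, t + r]`.
On the near range `[|c|, 1 + 2|c|]` the weight `(1 + λ)^b` is at most `(1 + |c|)^b` and the
singular factor integrates exactly. Beyond `1 + 2|c|` the distance `λ - c` is comparable to
`1 + λ`, so the integrand is `O((1 + λ)^(a + b - 1))`, integrable at infinity since `a + b < 0`.
If `t + r ≤ 1 + 2|c|` only the near range occurs, the singular factor gives `(2r)^a / a`, and
`1 + t + r ≤ 2(1 + |c|)` converts `(1 + |c|)^(-a)` into `(1 + t + r)^(-a)`. Otherwise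
`1 + t + r ≤ 4r`, so `r^a (1 + t + r)^(-a) ≥ 4^(-a)` and the bound by `(1 + |c|)^(a + b)`
suffices.
-/

open MeasureTheory

namespace DecayIntegral

variable {a b c d : ℝ}

lemma intervalIntegrable_sub_rpow {e : ℝ} (he : -1 < e) (c u v : ℝ) :
    IntervalIntegrable (fun l => (l - c) ^ e) volume u v := by
  simpa using
    (intervalIntegral.intervalIntegrable_rpow' he (a := u - c) (b := v - c)).comp_sub_right c

lemma integral_sub_rpow (ha : 0 < a) (c u v : ℝ) :
    ∫ l in u..v, (l - c) ^ (a - 1) = ((v - c) ^ a - (u - c) ^ a) / a := by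
  rw [intervalIntegral.integral_comp_sub_right (fun x => x ^ (a - 1)) c,
    integral_rpow (Or.inl (by linarith)), sub_add_cancel]

lemma integral_one_add_rpow_le {s p R : ℝ} (hs : s < 0) (hp : -1 < p) (hpR : p ≤ R) :
    ∫ l in p..R, (1 + l) ^ (s - 1) ≤ (1 + p) ^ s / (-s) := by
  have hint : ∫ l in p..R, (1 + l) ^ (s - 1) = ((1 + R) ^ s - (1 + p) ^ s) / s := by
    rw [intervalIntegral.integral_comp_add_left (fun x => x ^ (s - 1)) 1,
      integral_rpow
        (Or.inr ⟨by linarith, Set.notMem_uIcc_of_lt (by linarith) (by linarith)⟩),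
      sub_add_cancel]
  rw [hint, div_neg, ← neg_div]
  exact div_le_div_of_nonpos_of_le hs.le
    (by linarith [Real.rpow_nonneg (by linarith : 0 ≤ 1 + R) s])

lemma rpow_le_two_rpow_abs_mul_rpow {x y e : ℝ} (hy : 0 < y) (hyx : y / 2 ≤ x)
    (hxy : x ≤ 2 * y) :
    x ^ e ≤ 2 ^ |e| * y ^ e := by
  rcases le_or_gt 0 e with he | he
  · rw [abs_of_nonneg he, ← Real.mul_rpow zero_le_two hy.le]
    exact Real.rpow_le_rpow (by linarith) hxy he
  · rw [abs_of_neg he, Real.rpow_neg zero_le_two, ← div_eq_inv_mul,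
      ← Real.div_rpow hy.le zero_le_two]
    exact Real.rpow_le_rpow_of_nonpos (by positivity) hyx he.le

lemma intervalIntegrable_one_add_rpow_mul_sub_rpow (ha : 0 < a) {u v : ℝ} (hu : -1 < u)
    (hv : -1 < v) :
    IntervalIntegrable (fun l => (1 + l) ^ b * (l - c) ^ (a - 1)) volume u v := by
  refine (intervalIntegrable_sub_rpow (by linarith) c u v).continuousOn_mul ?_
  refine ContinuousOn.rpow_const (by fun_prop) fun l hl => Or.inl ?_
  rcases Set.mem_uIcc.mp hl with h | h <;> linarith [h.1]

lemma integral_one_add_rpow_mul_sub_rpow_le (ha : 0 < a) (hb : b ≤ 0) {u v : ℝ} (hcu : c ≤ u)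
    (hu : -1 < u) (huv : u ≤ v) :
    ∫ l in u..v, (1 + l) ^ b * (l - c) ^ (a - 1) ≤ (1 + u) ^ b * ((v - c) ^ a / a) := by
  calc ∫ l in u..v, (1 + l) ^ b * (l - c) ^ (a - 1)
      ≤ ∫ l in u..v, (1 + u) ^ b * (l - c) ^ (a - 1) := by
        refine intervalIntegral.integral_mono_on huv
          (intervalIntegrable_one_add_rpow_mul_sub_rpow ha hu (by linarith))
          ((intervalIntegrable_sub_rpow (by linarith) c u v).const_mul _) fun l hl => ?_
        exact mul_le_mul_of_nonneg_right
          (Real.rpow_le_rpow_of_nonpos (by linarith) (by linarith [hl.1]) hb)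
          (Real.rpow_nonneg (by linarith [hl.1]) _)
    _ = (1 + u) ^ b * (((v - c) ^ a - (u - c) ^ a) / a) := by
        rw [intervalIntegral.integral_const_mul, integral_sub_rpow ha]
    _ ≤ (1 + u) ^ b * ((v - c) ^ a / a) :=
        mul_le_mul_of_nonneg_left
          (div_le_div_of_nonneg_right (sub_le_self _ (Real.rpow_nonneg (by linarith) _)) ha.le)
          (Real.rpow_nonneg (by linarith) _)

lemma integral_tail_one_add_rpow_mul_sub_rpow_le (ha : 0 < a) (hab : a + b < 0) (hc : |c| ≤ d)
    {R : ℝ} (hR : 1 + 2 * d ≤ R) :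
    ∫ l in (1 + 2 * d)..R, (1 + l) ^ b * (l - c) ^ (a - 1) ≤
      2 ^ |a - 1| / (-(a + b)) * (1 + d) ^ (a + b) := by
  obtain ⟨hdc, hcd⟩ := abs_le.mp hc
  have hd : 0 ≤ d := (abs_nonneg c).trans hc
  have hcompare : ∀ l ∈ Set.Icc (1 + 2 * d) R,
      (1 + l) ^ b * (l - c) ^ (a - 1) ≤ 2 ^ |a - 1| * (1 + l) ^ (a + b - 1) := by
    intro l hl
    have hl0 : 0 < 1 + l := by linarith [hl.1]
    calc (1 + l) ^ b * (l - c) ^ (a - 1)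
        ≤ (1 + l) ^ b * (2 ^ |a - 1| * (1 + l) ^ (a - 1)) := by
          gcongr
          exact rpow_le_two_rpow_abs_mul_rpow hl0 (by linarith [hl.1]) (by linarith [hl.1])
      _ = 2 ^ |a - 1| * (1 + l) ^ (a + b - 1) := by
          rw [mul_left_comm, ← Real.rpow_add hl0]
          ring_nf
  calc ∫ l in (1 + 2 * d)..R, (1 + l) ^ b * (l - c) ^ (a - 1)
      ≤ ∫ l in (1 + 2 * d)..R, 2 ^ |a - 1| * (1 + l) ^ (a + b - 1) := by
        refine intervalIntegral.integral_mono_on hR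
          (intervalIntegrable_one_add_rpow_mul_sub_rpow ha (by linarith) (by linarith))
          (ContinuousOn.intervalIntegrable ?_) hcompare
        refine ContinuousOn.mul continuousOn_const
          (ContinuousOn.rpow_const (by fun_prop) fun l hl => Or.inl ?_)
        rw [Set.uIcc_of_le hR] at hl
        linarith [hl.1]
    _ ≤ 2 ^ |a - 1| * ((1 + (1 + 2 * d)) ^ (a + b) / (-(a + b))) := by
        rw [intervalIntegral.integral_const_mul]
        gcongr
        exact integral_one_add_rpow_le hab (by linarith) hR
    _ ≤ 2 ^ |a - 1| * ((1 + d) ^ (a + b) / (-(a + b))) := by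
        gcongr ?_ * (?_ / _)
        · linarith
        · exact Real.rpow_le_rpow_of_nonpos (by linarith) (by linarith) hab.le
    _ = 2 ^ |a - 1| / (-(a + b)) * (1 + d) ^ (a + b) := by ring

lemma integral_one_add_rpow_mul_sub_rpow_le_of_one_add_two_mul_le (ha : 0 < a) (hab : a + b < 0)
    (hc : |c| ≤ d) {R : ℝ} (hR : 1 + 2 * d ≤ R) :
    ∫ l in d..R, (1 + l) ^ b * (l - c) ^ (a - 1) ≤
      (3 ^ a / a + 2 ^ |a - 1| / (-(a + b))) * (1 + d) ^ (a + b) := by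
  obtain ⟨hdc, hcd⟩ := abs_le.mp hc
  have hd : 0 ≤ d := (abs_nonneg c).trans hc
  have hnear : ∫ l in d..(1 + 2 * d), (1 + l) ^ b * (l - c) ^ (a - 1) ≤
      3 ^ a / a * (1 + d) ^ (a + b) :=
    calc ∫ l in d..(1 + 2 * d), (1 + l) ^ b * (l - c) ^ (a - 1)
        ≤ (1 + d) ^ b * ((1 + 2 * d - c) ^ a / a) :=
          integral_one_add_rpow_mul_sub_rpow_le ha (by linarith) hcd (by linarith) (by linarith)
      _ ≤ (1 + d) ^ b * ((3 * (1 + d)) ^ a / a) := by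
          gcongr <;> linarith
      _ = 3 ^ a / a * (1 + d) ^ (a + b) := by
          rw [Real.mul_rpow zero_le_three (by linarith), Real.rpow_add (by linarith)]
          ring
  rw [← intervalIntegral.integral_add_adjacent_intervals (b := 1 + 2 * d)
    (intervalIntegrable_one_add_rpow_mul_sub_rpow ha (by linarith) (by linarith))
    (intervalIntegrable_one_add_rpow_mul_sub_rpow ha (by linarith) (by linarith))]
  linarith [integral_tail_one_add_rpow_mul_sub_rpow_le ha hab hc hR]

lemma rpow_mul_two_mul_rpow_le (ha : 0 < a) {r t : ℝ} (hr : 0 ≤ r) (ht : 0 ≤ t)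
    (h : t + r ≤ 1 + 2 * |t - r|) :
    (1 + |t - r|) ^ b * ((2 * r) ^ a / a) ≤
      4 ^ a / a * (r ^ a * (1 + t + r) ^ (-a) * (1 + |t - r|) ^ (a + b)) := by
  have hd : 0 < 1 + |t - r| := by positivity
  have hscale : (2 / (1 + |t - r|)) ^ a ≤ (4 / (1 + t + r)) ^ a := by
    refine Real.rpow_le_rpow (by positivity) ?_ ha.le
    rw [div_le_div_iff₀ hd (by linarith)]
    linarith
  rw [Real.div_rpow zero_le_two hd.le, Real.div_rpow zero_le_four (by linarith)] at hscale
  calc (1 + |t - r|) ^ b * ((2 * r) ^ a / a)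
      = 2 ^ a / (1 + |t - r|) ^ a * (r ^ a / a * (1 + |t - r|) ^ (a + b)) := by
        rw [Real.mul_rpow zero_le_two hr, Real.rpow_add hd]
        field_simp
    _ ≤ 4 ^ a / (1 + t + r) ^ a * (r ^ a / a * (1 + |t - r|) ^ (a + b)) := by
        gcongr
    _ = 4 ^ a / a * (r ^ a * (1 + t + r) ^ (-a) * (1 + |t - r|) ^ (a + b)) := by
        rw [Real.rpow_neg (by linarith)]
        ring

lemma one_le_four_mul_rpow_mul_rpow_neg (ha : 0 ≤ a) {r t : ℝ} (h : 1 + 2 * |t - r| ≤ t + r) :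
    1 ≤ (4 * r) ^ a * (1 + t + r) ^ (-a) := by
  have hpos : 0 < 1 + t + r := by linarith [abs_nonneg (t - r)]
  have hle : 1 + t + r ≤ 4 * r := by
    cases abs_cases (t - r) <;> linarith
  rw [Real.rpow_neg hpos.le, ← div_eq_mul_inv, one_le_div (by positivity)]
  exact Real.rpow_le_rpow hpos.le hle ha

lemma integral_le_of_le_one_add_two_mul_abs (ha : 0 < a) (hb : b ≤ 0) {r t : ℝ} (hr : 0 ≤ r)
    (ht : 0 ≤ t) (h : t + r ≤ 1 + 2 * |t - r|) :
    ∫ l in |t - r|..(t + r), (1 + l) ^ b * (l - (t - r)) ^ (a - 1) ≤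
      4 ^ a / a * (r ^ a * (1 + t + r) ^ (-a) * (1 + |t - r|) ^ (a + b)) :=
  calc _ ≤ (1 + |t - r|) ^ b * ((t + r - (t - r)) ^ a / a) :=
        integral_one_add_rpow_mul_sub_rpow_le ha hb (le_abs_self _)
          (by linarith [abs_nonneg (t - r)])
          (abs_le.mpr ⟨by linarith, by linarith⟩)
    _ = (1 + |t - r|) ^ b * ((2 * r) ^ a / a) := by rw [show t + r - (t - r) = 2 * r by ring]
    _ ≤ _ := rpow_mul_two_mul_rpow_le ha hr ht h

lemma integral_le_of_one_add_two_mul_abs_le (ha : 0 < a) (hab : a + b < 0) {r t : ℝ}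
    (hr : 0 ≤ r) (h : 1 + 2 * |t - r| ≤ t + r) :
    ∫ l in |t - r|..(t + r), (1 + l) ^ b * (l - (t - r)) ^ (a - 1) ≤
      4 ^ a * (3 ^ a / a + 2 ^ |a - 1| / (-(a + b))) *
        (r ^ a * (1 + t + r) ^ (-a) * (1 + |t - r|) ^ (a + b)) :=
  calc _ ≤ (3 ^ a / a + 2 ^ |a - 1| / (-(a + b))) * (1 + |t - r|) ^ (a + b) :=
        integral_one_add_rpow_mul_sub_rpow_le_of_one_add_two_mul_le ha hab le_rfl h
    _ ≤ (4 * r) ^ a * (1 + t + r) ^ (-a) *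
          ((3 ^ a / a + 2 ^ |a - 1| / (-(a + b))) * (1 + |t - r|) ^ (a + b)) :=
        le_mul_of_one_le_left
          (mul_nonneg (add_nonneg (by positivity) (div_nonneg (by positivity) (by linarith)))
            (by positivity))
          (one_le_four_mul_rpow_mul_rpow_neg ha.le h)
    _ = _ := by
        rw [Real.mul_rpow zero_le_four hr]
        ring

end DecayIntegral

open DecayIntegral

theorem stmt3 (a b : ℝ) (ha : 0 < a) (hb : b < -a) :
    ∃ C : ℝ, 0 < C ∧ ∀ r t : ℝ, 0 < r → 0 < t →
      (∫ l in |t - r|..(t + r), (1 + l) ^ b / (r - t + l) ^ (1 - a)) ≤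
        C * r ^ a * (1 + t + r) ^ (-a) * (1 + |t - r|) ^ (a + b) := by
  have hab : a + b < 0 := by linarith
  set K := 3 ^ a / a + 2 ^ |a - 1| / (-(a + b))
  have hK : 1 / a ≤ K :=
    le_add_of_le_of_nonneg
      (div_le_div_of_nonneg_right (Real.one_le_rpow (by norm_num) ha.le) ha.le)
      (div_nonneg (by positivity) (by linarith))
  refine ⟨4 ^ a * K, mul_pos (by positivity) ((one_div_pos.mpr ha).trans_le hK),
    fun r t hr ht => ?_⟩
  have hintegrand : ∫ l in |t - r|..(t + r), (1 + l) ^ b / (r - t + l) ^ (1 - a) =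
      ∫ l in |t - r|..(t + r), (1 + l) ^ b * (l - (t - r)) ^ (a - 1) := by
    refine intervalIntegral.integral_congr fun l hl => ?_
    rw [Set.uIcc_of_le (abs_le.mpr ⟨by linarith, by linarith⟩)] at hl
    have hl0 : 0 ≤ l - (t - r) := by linarith [hl.1, le_abs_self (t - r)]
    rw [show r - t + l = l - (t - r) by ring, div_eq_mul_inv, ← Real.rpow_neg hl0, neg_sub]
  rw [hintegrand]
  rcases le_or_gt (t + r) (1 + 2 * |t - r|) with hnear | hfar
  · calc _ ≤ _ := integral_le_of_le_one_add_two_mul_abs ha (by linarith) hr.le ht.le hnear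
      _ ≤ 4 ^ a * K * (r ^ a * (1 + t + r) ^ (-a) * (1 + |t - r|) ^ (a + b)) := by
          rw [div_eq_mul_one_div]
          gcongr
      _ = _ := by ring
  · calc _ ≤ _ := integral_le_of_one_add_two_mul_abs_le ha hab hr.le hfar.le
      _ = _ := by ring
end

section
/- Let m ≥ a > 0 and κ > 2 with κ < m + 2. Then there is a constant C = C(a, m, κ) such that for all t ≥ r > 0: ∫₀^{t-r} ∫₀^{t-r-τ} λ^m (1+λ)^{1-κ} / ((t-r-τ)^{m+a} · (t-r-τ-λ)^{1-a}) dλ dτ ≤ C. -/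
/-!
For `T = t - r - τ` the inner integral is at most `K (1 + T/2)^(1-κ)`. On `[T/2, T]` the factor
`l^m (1+l)^(1-κ)` is at most `T^m (1+T/2)^(1-κ)` and `(T-l)^(a-1)` integrates to `(T/2)^a / a`.
On `[0, T/2]` the factor `(T-l)^(a-1)` is comparable to `T^(a-1)`, and
`∫₀^X l^m (1+l)^(1-κ) ≤ X^(m+1) (1+X)^(1-κ) / (m+2-κ)` because the integrand is dominated by the
derivative of the right-hand side. As `κ > 2`, `(1 + T/2)^(1-κ)` is integrable on `(0, ∞)`,
which bounds the outer integral uniformly in `r` and `t`.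
-/

open MeasureTheory intervalIntegral Set

lemma rpow_le_rpow_add_rpow_of_mem_Icc {x y z : ℝ} (s : ℝ) (hy : 0 < y) (hx : x ∈ Icc y z) :
    x ^ s ≤ y ^ s + z ^ s := by
  have hx0 : 0 < x := hy.trans_le hx.1
  rcases le_total 0 s with hs | hs
  · linarith [Real.rpow_le_rpow hx0.le hx.2 hs, Real.rpow_nonneg hy.le s]
  · linarith [Real.rpow_le_rpow_of_nonpos hy hx.1 hs, Real.rpow_nonneg (hx0.trans_le hx.2).le s]

lemma intervalIntegral.integral_mono_on_of_nonneg {μ : Measure ℝ} {f g : ℝ → ℝ} {a b : ℝ}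
    (hab : a ≤ b) (hf : ∀ x ∈ Icc a b, 0 ≤ f x) (hfg : ∀ x ∈ Icc a b, f x ≤ g x)
    (hg : IntervalIntegrable g μ a b) : ∫ x in a..b, f x ∂μ ≤ ∫ x in a..b, g x ∂μ := by
  rw [integral_of_le hab, integral_of_le hab]
  exact setIntegral_mono_of_nonneg (fun x hx => hf x (Ioc_subset_Icc_self hx))
    (fun x hx => hfg x (Ioc_subset_Icc_self hx)) hg.1

lemma integral_sub_rpow {a : ℝ} (ha : 0 < a) (c T : ℝ) :
    ∫ l in c..T, (T - l) ^ (a - 1) = (T - c) ^ a / a := by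
  rw [integral_comp_sub_left (fun x : ℝ => x ^ (a - 1)) T, sub_self,
    integral_rpow (Or.inl (by linarith)), sub_add_cancel, Real.zero_rpow ha.ne', sub_zero]

lemma continuousOn_one_add_rpow (p : ℝ) : ContinuousOn (fun l : ℝ => (1 + l) ^ p) (Ici 0) :=
  (continuousOn_const.add continuousOn_id).rpow_const
    fun l hl => Or.inl (show 1 + l ≠ 0 by linarith [mem_Ici.mp hl])

lemma continuousOn_rpow_mul_one_add_rpow {m : ℝ} (hm : 0 ≤ m) (p : ℝ) :
    ContinuousOn (fun l : ℝ => l ^ m * (1 + l) ^ p) (Ici 0) :=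
  (continuousOn_id.rpow_const fun _ _ => Or.inr hm).mul (continuousOn_one_add_rpow p)

section

variable {a m p T : ℝ}

lemma integral_rpow_mul_one_add_rpow_le (hm : 0 ≤ m) (hp : p ≤ 0) (hmp : 0 < m + 1 + p)
    {X : ℝ} (hX : 0 ≤ X) :
    ∫ l in (0:ℝ)..X, l ^ m * (1 + l) ^ p ≤ X ^ (m + 1) * (1 + X) ^ p / (m + 1 + p) := by
  have hcont : ContinuousOn (fun l : ℝ => l ^ (m + 1) * (1 + l) ^ p / (m + 1 + p)) (Icc 0 X) :=
    ((continuousOn_rpow_mul_one_add_rpow (by linarith) p).div_const _).mono Icc_subset_Ici_self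
  have hderiv : ∀ l ∈ Ioo 0 X, HasDerivAt (fun l : ℝ => l ^ (m + 1) * (1 + l) ^ p / (m + 1 + p))
      ((1 * (m + 1) * l ^ (m + 1 - 1) * (1 + l) ^ p
        + l ^ (m + 1) * (1 * p * (1 + l) ^ (p - 1))) / (m + 1 + p)) l := fun l hl =>
    (((hasDerivAt_id l).rpow_const (Or.inl hl.1.ne')).mul
      (((hasDerivAt_id l).const_add 1).rpow_const
        (Or.inl (show 1 + l ≠ 0 by linarith [hl.1])))).div_const _
  have hle : ∀ l ∈ Ioo 0 X, l ^ m * (1 + l) ^ p ≤ (1 * (m + 1) * l ^ (m + 1 - 1) * (1 + l) ^ p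
        + l ^ (m + 1) * (1 * p * (1 + l) ^ (p - 1))) / (m + 1 + p) := by
    rintro l ⟨hl, -⟩
    have h1l : 0 < 1 + l := by linarith
    rw [add_sub_cancel_right, Real.rpow_add_one hl.ne', Real.rpow_sub_one h1l.ne', le_div_iff₀ hmp]
    have hB := Real.rpow_pos_of_pos h1l p
    have key : l * ((1 + l) ^ p / (1 + l)) ≤ (1 + l) ^ p := by
      rw [mul_div_assoc']; exact div_le_of_le_mul₀ h1l.le hB.le (by nlinarith)
    nlinarith [mul_le_mul_of_nonneg_left key (Real.rpow_nonneg hl.le m)]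
  refine (integral_le_sub_of_hasDeriv_right_of_le hX hcont
    (fun l hl => (hderiv l hl).hasDerivWithinAt)
    ((continuousOn_rpow_mul_one_add_rpow hm p).mono Icc_subset_Ici_self).integrableOn_Icc
    hle).trans_eq ?_
  rw [Real.zero_rpow (by linarith), zero_mul, zero_div, sub_zero]

lemma intervalIntegrable_sub_rpow (ha : 0 < a) (T c d : ℝ) :
    IntervalIntegrable (fun l => (T - l) ^ (a - 1)) volume c d := by
  simpa using (intervalIntegrable_rpow' (a := T - c) (b := T - d) (r := a - 1)
    (by linarith)).comp_sub_left T

lemma intervalIntegrable_rpow_mul_one_add_rpow_mul_sub_rpow (ha : 0 < a) (hm : 0 ≤ m)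
    {c d : ℝ} (hc : 0 ≤ c) (hcd : c ≤ d) :
    IntervalIntegrable (fun l => l ^ m * (1 + l) ^ p * (T - l) ^ (a - 1)) volume c d := by
  refine (intervalIntegrable_sub_rpow ha T c d).continuousOn_mul
    ((continuousOn_rpow_mul_one_add_rpow hm p).mono ?_)
  rw [uIcc_of_le hcd]
  exact Icc_subset_Ici_iff hcd |>.mpr hc

lemma integral_upper_half_le (ha : 0 < a) (hm : 0 ≤ m) (hp : p ≤ 0) (hT : 0 < T) :
    ∫ l in T / 2..T, l ^ m * (1 + l) ^ p * (T - l) ^ (a - 1)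
      ≤ T ^ (m + a) * (1 + T / 2) ^ p / a := by
  have hbound : ∀ l ∈ Icc (T / 2) T, l ^ m * (1 + l) ^ p * (T - l) ^ (a - 1)
      ≤ T ^ m * (1 + T / 2) ^ p * (T - l) ^ (a - 1) := by
    rintro l ⟨hl1, hl2⟩
    refine mul_le_mul_of_nonneg_right (mul_le_mul (Real.rpow_le_rpow (by linarith) hl2 hm)
      (Real.rpow_le_rpow_of_nonpos (by linarith) (by linarith) hp)
      (Real.rpow_nonneg (by linarith) p) (Real.rpow_nonneg hT.le m))
      (Real.rpow_nonneg (by linarith) _)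
  calc ∫ l in T / 2..T, l ^ m * (1 + l) ^ p * (T - l) ^ (a - 1)
      ≤ ∫ l in T / 2..T, T ^ m * (1 + T / 2) ^ p * (T - l) ^ (a - 1) :=
        integral_mono_on (by linarith)
          (intervalIntegrable_rpow_mul_one_add_rpow_mul_sub_rpow ha hm (by linarith) (by linarith))
          ((intervalIntegrable_sub_rpow ha T _ T).const_mul _) hbound
    _ = T ^ m * (1 + T / 2) ^ p * ((T / 2) ^ a / a) := by
        rw [intervalIntegral.integral_const_mul, integral_sub_rpow ha, sub_half]
    _ ≤ T ^ m * (1 + T / 2) ^ p * (T ^ a / a) := by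
        gcongr; linarith
    _ = T ^ (m + a) * (1 + T / 2) ^ p / a := by
        rw [Real.rpow_add hT]; ring

lemma integral_lower_half_le (ha : 0 < a) (hm : 0 ≤ m) (hp : p ≤ 0) (hmp : 0 < m + 1 + p)
    (hT : 0 < T) :
    ∫ l in (0:ℝ)..T / 2, l ^ m * (1 + l) ^ p * (T - l) ^ (a - 1)
      ≤ 2 * T ^ (m + a) * (1 + T / 2) ^ p / (m + 1 + p) := by
  set c := (T / 2) ^ (a - 1) + T ^ (a - 1)
  have hbound : ∀ l ∈ Icc 0 (T / 2), l ^ m * (1 + l) ^ p * (T - l) ^ (a - 1)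
      ≤ c * (l ^ m * (1 + l) ^ p) := by
    rintro l ⟨hl1, hl2⟩
    rw [mul_comm c]
    exact mul_le_mul_of_nonneg_left (rpow_le_rpow_add_rpow_of_mem_Icc _ (by linarith)
      ⟨by linarith, by linarith⟩) (mul_nonneg (Real.rpow_nonneg hl1 m)
        (Real.rpow_nonneg (by linarith) p))
  have hc : c * (T / 2) ^ (m + 1) ≤ 2 * T ^ (m + a) := by
    have hhalf : (T / 2) ^ (a - 1) * (T / 2) ^ (m + 1) ≤ T ^ (m + a) := by
      rw [← Real.rpow_add (by linarith), show a - 1 + (m + 1) = m + a by ring]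
      exact Real.rpow_le_rpow (by linarith) (by linarith) (by linarith)
    have hfull : T ^ (a - 1) * (T / 2) ^ (m + 1) ≤ T ^ (m + a) := by
      calc T ^ (a - 1) * (T / 2) ^ (m + 1) ≤ T ^ (a - 1) * T ^ (m + 1) := by
            gcongr; linarith
        _ = T ^ (m + a) := by rw [← Real.rpow_add hT]; ring_nf
    linarith [add_mul ((T / 2) ^ (a - 1)) (T ^ (a - 1)) ((T / 2) ^ (m + 1))]
  calc ∫ l in (0:ℝ)..T / 2, l ^ m * (1 + l) ^ p * (T - l) ^ (a - 1)
      ≤ ∫ l in (0:ℝ)..T / 2, c * (l ^ m * (1 + l) ^ p) :=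
        integral_mono_on (half_pos hT).le
          (intervalIntegrable_rpow_mul_one_add_rpow_mul_sub_rpow ha hm le_rfl (by linarith))
          (ContinuousOn.intervalIntegrable ((continuousOn_rpow_mul_one_add_rpow hm p).mono
            (by rw [uIcc_of_le (by linarith)]; exact Icc_subset_Ici_self)) |>.const_mul c) hbound
    _ ≤ c * ((T / 2) ^ (m + 1) * (1 + T / 2) ^ p / (m + 1 + p)) := by
        rw [intervalIntegral.integral_const_mul]
        gcongr
        exact integral_rpow_mul_one_add_rpow_le hm hp hmp (by linarith)
    _ = c * (T / 2) ^ (m + 1) * ((1 + T / 2) ^ p / (m + 1 + p)) := by ring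
    _ ≤ 2 * T ^ (m + a) * ((1 + T / 2) ^ p / (m + 1 + p)) := by gcongr
    _ = 2 * T ^ (m + a) * (1 + T / 2) ^ p / (m + 1 + p) := by ring

lemma integral_rpow_mul_one_add_rpow_mul_sub_rpow_le (ha : 0 < a) (hm : 0 ≤ m) (hp : p ≤ 0)
    (hmp : 0 < m + 1 + p) (hT : 0 < T) :
    ∫ l in (0:ℝ)..T, l ^ m * (1 + l) ^ p * (T - l) ^ (a - 1)
      ≤ (1 / a + 2 / (m + 1 + p)) * T ^ (m + a) * (1 + T / 2) ^ p := by
  rw [← integral_add_adjacent_intervals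
    (intervalIntegrable_rpow_mul_one_add_rpow_mul_sub_rpow ha hm le_rfl (half_pos hT).le)
    (intervalIntegrable_rpow_mul_one_add_rpow_mul_sub_rpow ha hm (half_pos hT).le
      (half_le_self hT.le))]
  calc _ ≤ 2 * T ^ (m + a) * (1 + T / 2) ^ p / (m + 1 + p) + T ^ (m + a) * (1 + T / 2) ^ p / a :=
        add_le_add (integral_lower_half_le ha hm hp hmp hT) (integral_upper_half_le ha hm hp hT)
    _ = _ := by ring

lemma integral_div_rpow_mul_sub_rpow_le (ha : 0 < a) (hm : 0 ≤ m) (hp : p ≤ 0)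
    (hmp : 0 < m + 1 + p) (hT : 0 ≤ T) :
    ∫ l in (0:ℝ)..T, l ^ m * (1 + l) ^ p / (T ^ (m + a) * (T - l) ^ (1 - a))
      ≤ (1 / a + 2 / (m + 1 + p)) * (1 + T / 2) ^ p := by
  rcases hT.eq_or_lt with rfl | hT
  · rw [integral_same]
    exact mul_nonneg (add_nonneg (by positivity) (div_nonneg zero_le_two hmp.le))
      (Real.rpow_nonneg (by norm_num) p)
  have hTpos := Real.rpow_pos_of_pos hT (m + a)
  calc ∫ l in (0:ℝ)..T, l ^ m * (1 + l) ^ p / (T ^ (m + a) * (T - l) ^ (1 - a))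
      = ∫ l in (0:ℝ)..T, l ^ m * (1 + l) ^ p * (T - l) ^ (a - 1) / T ^ (m + a) := by
        refine integral_congr fun l hl => ?_
        rw [uIcc_of_le hT.le] at hl
        rw [show a - 1 = -(1 - a) by ring, Real.rpow_neg (by linarith [hl.2])]
        ring
    _ = (∫ l in (0:ℝ)..T, l ^ m * (1 + l) ^ p * (T - l) ^ (a - 1)) / T ^ (m + a) :=
        intervalIntegral.integral_div _ _
    _ ≤ (1 / a + 2 / (m + 1 + p)) * T ^ (m + a) * (1 + T / 2) ^ p / T ^ (m + a) :=
        div_le_div_of_nonneg_right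
          (integral_rpow_mul_one_add_rpow_mul_sub_rpow_le ha hm hp hmp hT) hTpos.le
    _ = (1 / a + 2 / (m + 1 + p)) * (1 + T / 2) ^ p := by field_simp

lemma integral_div_rpow_mul_sub_rpow_nonneg (hT : 0 ≤ T) :
    0 ≤ ∫ l in (0:ℝ)..T, l ^ m * (1 + l) ^ p / (T ^ (m + a) * (T - l) ^ (1 - a)) :=
  integral_nonneg hT fun l hl =>
    div_nonneg (mul_nonneg (Real.rpow_nonneg hl.1 m) (Real.rpow_nonneg (by linarith [hl.1]) p))
      (mul_nonneg (Real.rpow_nonneg hT _) (Real.rpow_nonneg (by linarith [hl.2]) _))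

end

lemma integral_one_add_half_sub_rpow_le {q : ℝ} (hq : q < -1) {S : ℝ} (hS : 0 ≤ S) :
    ∫ τ in (0:ℝ)..S, (1 + (S - τ) / 2) ^ q ≤ 2 / (-1 - q) := by
  have hq1 : 0 < -1 - q := by linarith
  have hsub : (∫ τ in (0:ℝ)..S, (1 + (S - τ) / 2) ^ q) = ∫ u in (0:ℝ)..S, (1 + u / 2) ^ q := by
    simpa using integral_comp_sub_left (fun u : ℝ => (1 + u / 2) ^ q) (a := 0) (b := S) S
  have hint : ∫ v in (0:ℝ)..S / 2, (1 + v) ^ q = (1 - (1 + S / 2) ^ (q + 1)) / (-1 - q) := by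
    rw [integral_comp_add_left (fun v : ℝ => v ^ q) 1, add_zero,
      integral_rpow (Or.inr ⟨by linarith, by
        rw [uIcc_of_le (by linarith)]; exact fun h => by linarith [h.1]⟩), Real.one_rpow,
      div_eq_div_iff (by linarith) hq1.ne']
    ring
  rw [hsub, integral_comp_div (fun v : ℝ => (1 + v) ^ q) two_ne_zero, zero_div, hint, smul_eq_mul,
    mul_div_assoc']
  gcongr
  linarith [Real.rpow_nonneg (show (0:ℝ) ≤ 1 + S / 2 by linarith) (q + 1)]

theorem stmt5_general (a m κ : ℝ) (ha : 0 < a) (hκ : 2 < κ) (hκ2 : κ < m + 2) :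
    ∃ C : ℝ, 0 < C ∧ ∀ r t : ℝ, 0 < r → r ≤ t →
      (∫ τ in (0:ℝ)..(t - r), ∫ l in (0:ℝ)..(t - r - τ),
          l ^ m * (1 + l) ^ (1 - κ) /
            ((t - r - τ) ^ (m + a) * (t - r - τ - l) ^ (1 - a))) ≤ C := by
  have hm : 0 ≤ m := by linarith
  set K := 1 / a + 2 / (m + 1 + (1 - κ))
  have hK : 0 < K := add_pos (by positivity) (div_pos two_pos (by linarith))
  refine ⟨K * (2 / (κ - 2)), mul_pos hK (div_pos two_pos (by linarith)), fun r t _ hrt => ?_⟩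
  have hS : 0 ≤ t - r := sub_nonneg.mpr hrt
  have hbound_int : IntervalIntegrable (fun τ => K * (1 + (t - r - τ) / 2) ^ (1 - κ))
      volume 0 (t - r) :=
    ((ContinuousOn.rpow_const (by fun_prop) fun τ hτ => Or.inl (by
      rw [uIcc_of_le hS] at hτ; linarith [hτ.2])).intervalIntegrable).const_mul K
  calc _ ≤ ∫ τ in (0:ℝ)..(t - r), K * (1 + (t - r - τ) / 2) ^ (1 - κ) :=
        integral_mono_on_of_nonneg hS
          (fun τ hτ => integral_div_rpow_mul_sub_rpow_nonneg (by linarith [hτ.2]))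
          (fun τ hτ => integral_div_rpow_mul_sub_rpow_le ha hm (by linarith) (by linarith)
            (by linarith [hτ.2]))
          hbound_int
    _ = K * ∫ τ in (0:ℝ)..(t - r), (1 + (t - r - τ) / 2) ^ (1 - κ) :=
        intervalIntegral.integral_const_mul _ _
    _ ≤ K * (2 / (κ - 2)) := by
        gcongr
        exact (integral_one_add_half_sub_rpow_le (by linarith) hS).trans_eq
          (by rw [show -1 - (1 - κ) = κ - 2 by ring])

theorem stmt5 (a m κ : ℝ) (ha : 0 < a) (ham : a ≤ m) (hκ : 2 < κ) (hκ2 : κ < m + 2) :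
    ∃ C : ℝ, 0 < C ∧ ∀ r t : ℝ, 0 < r → r ≤ t →
      (∫ τ in (0:ℝ)..(t - r), ∫ l in (0:ℝ)..(t - r - τ),
          l ^ m * (1 + l) ^ (1 - κ) /
            ((t - r - τ) ^ (m + a) * (t - r - τ - l) ^ (1 - a))) ≤ C :=
  stmt5_general a m κ ha hκ hκ2
end

section
/- Let m ≥ a > 0 and p > 1 with 2 - mp + m > 0. Then there is a constant C = C(a, m, p) such that for all t ≥ r > 0: ∫₀^{t-r} ∫₀^{t-r-τ} λ^{1-mp+2m} / ((t-r-τ)^{m+a} · (t-r-τ-λ)^{1-a}) dλ dτ ≤ C · (1 + t - r)^{2-mp+m}. -/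
/-!
Rescaling `l = s x` turns the inner integral over `(0, s)` with `s = t - r - τ` into a Beta
integral `B` times `s ^ (1 - m p + m)`, so the double integral is exactly
`B (t - r) ^ (2 - m p + m) / (2 - m p + m)`, which is at most a constant times
`(1 + t - r) ^ (2 - m p + m)`.
-/

open MeasureTheory

-- No integrability is needed: if the integrand is not integrable, both sides are the junk value `0`.
theorem integral_rpow_mul_sub_rpow {α β s : ℝ} (hs : 0 < s) :
    ∫ l in (0:ℝ)..s, l ^ α * (s - l) ^ β =
      s ^ (α + β + 1) * ∫ x in (0:ℝ)..1, x ^ α * (1 - x) ^ β := by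
  have hscale := intervalIntegral.integral_comp_mul_left
    (fun l => l ^ α * (s - l) ^ β) hs.ne' (a := 0) (b := 1)
  simp only [mul_zero, mul_one, smul_eq_mul] at hscale
  have hpull : ∫ x in (0:ℝ)..1, (s * x) ^ α * (s - s * x) ^ β =
      ∫ x in (0:ℝ)..1, s ^ (α + β) * (x ^ α * (1 - x) ^ β) := by
    refine intervalIntegral.integral_congr fun x hx => ?_
    rw [Set.uIcc_of_le zero_le_one] at hx
    rw [show s - s * x = s * (1 - x) by ring, Real.mul_rpow hs.le hx.1,
      Real.mul_rpow hs.le (by linarith [hx.2]), Real.rpow_add hs]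
    ring
  rw [hpull, intervalIntegral.integral_const_mul, eq_inv_mul_iff_mul_eq₀ hs.ne'] at hscale
  rw [← hscale, Real.rpow_add_one hs.ne']
  ring

theorem integral_rpow_div_mul_sub_rpow {α γ a s : ℝ} (hs : 0 < s) :
    ∫ l in (0:ℝ)..s, l ^ α / (s ^ γ * (s - l) ^ (1 - a)) =
      (∫ x in (0:ℝ)..1, x ^ α * (1 - x) ^ (a - 1)) * s ^ (α + a - γ) := by
  have hpt : ∀ l ∈ Set.uIcc 0 s,
      l ^ α / (s ^ γ * (s - l) ^ (1 - a)) = s ^ (-γ) * (l ^ α * (s - l) ^ (a - 1)) := by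
    intro l hl
    rw [Set.uIcc_of_le hs.le] at hl
    rw [Real.rpow_neg hs.le, show a - 1 = -(1 - a) by ring,
      Real.rpow_neg (by linarith [hl.2]), div_eq_mul_inv, mul_inv]
    ring
  rw [intervalIntegral.integral_congr hpt, intervalIntegral.integral_const_mul,
    integral_rpow_mul_sub_rpow hs, ← mul_assoc, ← Real.rpow_add hs]
  ring_nf

theorem integral_integral_rpow_div_mul_sub_rpow {α γ a T : ℝ} (hT : 0 ≤ T)
    (he : -1 < α + a - γ) :
    ∫ τ in (0:ℝ)..T, ∫ l in (0:ℝ)..(T - τ),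
        l ^ α / ((T - τ) ^ γ * (T - τ - l) ^ (1 - a)) =
      (∫ x in (0:ℝ)..1, x ^ α * (1 - x) ^ (a - 1)) *
        (T ^ (α + a - γ + 1) / (α + a - γ + 1)) := by
  have hsub := intervalIntegral.integral_comp_sub_left
    (fun s => ∫ l in (0:ℝ)..s, l ^ α / (s ^ γ * (s - l) ^ (1 - a))) T (a := 0) (b := T)
  rw [sub_self, sub_zero] at hsub
  have hinner : ∀ᵐ s, s ∈ Set.uIoc 0 T →
      ∫ l in (0:ℝ)..s, l ^ α / (s ^ γ * (s - l) ^ (1 - a)) =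
        (∫ x in (0:ℝ)..1, x ^ α * (1 - x) ^ (a - 1)) * s ^ (α + a - γ) :=
    .of_forall fun s hs => integral_rpow_div_mul_sub_rpow (Set.uIoc_of_le hT ▸ hs).1
  rw [hsub, intervalIntegral.integral_congr_ae hinner, intervalIntegral.integral_const_mul,
    integral_rpow (Or.inl he), Real.zero_rpow (by linarith), sub_zero]

theorem stmt6_general (a m p : ℝ)
    (hcon : 0 < 2 - m * p + m) :
    ∃ C : ℝ, 0 < C ∧ ∀ r t : ℝ, 0 < r → r ≤ t →
      (∫ τ in (0:ℝ)..(t - r), ∫ l in (0:ℝ)..(t - r - τ),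
          l ^ (1 - m * p + 2 * m) /
            ((t - r - τ) ^ (m + a) * (t - r - τ - l) ^ (1 - a))) ≤
        C * (1 + t - r) ^ (2 - m * p + m) := by
  set β := 2 - m * p + m
  set B := ∫ x in (0:ℝ)..1, x ^ (1 - m * p + 2 * m) * (1 - x) ^ (a - 1)
  have hB : 0 ≤ B := intervalIntegral.integral_nonneg zero_le_one fun x hx =>
    mul_nonneg (Real.rpow_nonneg hx.1 _) (Real.rpow_nonneg (by linarith [hx.2]) _)
  refine ⟨B / β + 1, by positivity, fun r t _ hrt => ?_⟩
  have hT : 0 ≤ t - r := sub_nonneg.2 hrt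
  have hexp : 1 - m * p + 2 * m + a - (m + a) + 1 = β := by ring
  rw [integral_integral_rpow_div_mul_sub_rpow hT (by linarith), hexp, add_sub_assoc]
  calc B * ((t - r) ^ β / β) = B / β * (t - r) ^ β := by ring
    _ ≤ B / β * (1 + (t - r)) ^ β := by
        gcongr
        linarith
    _ ≤ (B / β + 1) * (1 + (t - r)) ^ β := by
        gcongr
        linarith

theorem stmt6 (a m p : ℝ) (ha : 0 < a) (ham : a ≤ m) (hp : 1 < p)
    (hcon : 0 < 2 - m * p + m) :
    ∃ C : ℝ, 0 < C ∧ ∀ r t : ℝ, 0 < r → r ≤ t →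
      (∫ τ in (0:ℝ)..(t - r), ∫ l in (0:ℝ)..(t - r - τ),
          l ^ (1 - m * p + 2 * m) /
            ((t - r - τ) ^ (m + a) * (t - r - τ - l) ^ (1 - a))) ≤
        C * (1 + t - r) ^ (2 - m * p + m) :=
  stmt6_general a m p hcon
end

section
/- Let a > 0 and μ ≤ a. Suppose r, t > 0, max(t-2r, 0) ≤ τ ≤ t, and set λ± = t - τ ± r. Then |λ_±|^a · (1 + |λ_±| + τ)^{-μ} ≤ C r^a (1 + t + r)^{-μ} for a constant C depending only on a and μ (independent of r, t, τ), for both choices of sign. -/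
/-!
Write `L = |λ|`, `P = 1 + L + τ` and `Q = 1 + t + r`. Since `|λ - (t - τ)| = r` and
`t - 2r ≤ τ ≤ t`, we have `L ≤ 3r` and `P ≤ Q`. For `μ ≤ 0` monotonicity finishes. For `μ > 0`,
either `Q ≤ 4P` (when `t ≥ 2r` or `r ≤ 1`), so that `P^{-μ} ≲ Q^{-μ}`, or `Q ≤ 12r`, and then
`L^a P^{-μ} ≤ L^{a-μ} ≤ r^{a-μ} ≲ r^a Q^{-μ}`.
-/

open Real

lemma rpow_neg_le_rpow_mul_rpow_neg {P Q c μ : ℝ} (hP : 0 < P) (hQ : 0 < Q) (hQP : Q ≤ c * P)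
    (hμ : 0 ≤ μ) : P ^ (-μ) ≤ c ^ μ * Q ^ (-μ) := by
  have hc : 0 < c := pos_of_mul_pos_left (hQ.trans_le hQP) hP.le
  calc P ^ (-μ) = c ^ μ * (c * P) ^ (-μ) := by
        rw [mul_rpow hc.le hP.le, ← mul_assoc, ← rpow_add hc, add_neg_cancel, rpow_zero, one_mul]
    _ ≤ c ^ μ * Q ^ (-μ) :=
        mul_le_mul_of_nonneg_left (rpow_le_rpow_of_nonpos hQ hQP (neg_nonpos.2 hμ)) (by positivity)

lemma rpow_mul_rpow_neg_le_rpow_sub {L P a μ : ℝ} (hL : 0 ≤ L) (hLP : L ≤ P) (hP : 0 < P)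
    (ha : a ≠ 0) (hμ : 0 ≤ μ) : L ^ a * P ^ (-μ) ≤ L ^ (a - μ) := by
  calc L ^ a * P ^ (-μ) = L ^ (a - μ) * (L ^ μ * P ^ (-μ)) := by
        rw [← mul_assoc, ← rpow_add' hL (by simpa using ha), sub_add_cancel]
    _ ≤ L ^ (a - μ) * (P ^ μ * P ^ (-μ)) := by gcongr
    _ = L ^ (a - μ) := by rw [← rpow_add hP, add_neg_cancel, rpow_zero, mul_one]

lemma rpow_mul_rpow_neg_le_of_le {a μ c r L P Q : ℝ} (ha : 0 < a) (hμa : μ ≤ a) (hc : 1 ≤ c)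
    (hL : 0 ≤ L) (hLr : L ≤ r) (hLP : L ≤ P) (hP : 0 < P) (hPQ : P ≤ Q)
    (hQ : Q ≤ c * P ∨ Q ≤ c * r) :
    L ^ a * P ^ (-μ) ≤ c ^ a * r ^ a * Q ^ (-μ) := by
  have hQ0 : 0 < Q := hP.trans_le hPQ
  have hr : 0 ≤ r := hL.trans hLr
  have hLa : L ^ a ≤ r ^ a := rpow_le_rpow hL hLr ha.le
  rcases le_or_gt μ 0 with hμ | hμ
  · calc L ^ a * P ^ (-μ) ≤ r ^ a * Q ^ (-μ) := by
          gcongr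
          exact neg_nonneg.2 hμ
      _ ≤ c ^ a * (r ^ a * Q ^ (-μ)) := le_mul_of_one_le_left (by positivity) (one_le_rpow hc ha.le)
      _ = c ^ a * r ^ a * Q ^ (-μ) := (mul_assoc _ _ _).symm
  have hcμ : c ^ μ ≤ c ^ a := rpow_le_rpow_of_exponent_le hc hμa
  rcases hQ with hQ | hQ
  · calc L ^ a * P ^ (-μ) ≤ r ^ a * (c ^ μ * Q ^ (-μ)) := by
          gcongr
          exact rpow_neg_le_rpow_mul_rpow_neg hP hQ0 hQ hμ.le
      _ = c ^ μ * r ^ a * Q ^ (-μ) := by ring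
      _ ≤ c ^ a * r ^ a * Q ^ (-μ) := by gcongr
  · have hr0 : 0 < r := pos_of_mul_pos_right (hQ0.trans_le hQ) (by linarith)
    calc L ^ a * P ^ (-μ) ≤ L ^ (a - μ) := rpow_mul_rpow_neg_le_rpow_sub hL hLP hP ha.ne' hμ.le
      _ ≤ r ^ (a - μ) := rpow_le_rpow hL hLr (sub_nonneg.2 hμa)
      _ = r ^ a * r ^ (-μ) := by rw [sub_eq_add_neg, rpow_add hr0]
      _ ≤ r ^ a * (c ^ μ * Q ^ (-μ)) := by
          gcongr
          exact rpow_neg_le_rpow_mul_rpow_neg hr0 hQ0 hQ hμ.le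
      _ = c ^ μ * r ^ a * Q ^ (-μ) := by ring
      _ ≤ c ^ a * r ^ a * Q ^ (-μ) := by gcongr

lemma abs_rpow_mul_rpow_neg_le {a μ r t τ l : ℝ} (ha : 0 < a) (hμa : μ ≤ a) (hr : 0 < r)
    (hτ : 0 ≤ τ) (ht2r : t - 2 * r ≤ τ) (hτt : τ ≤ t) (hl : |l - (t - τ)| ≤ r) :
    |l| ^ a * (1 + |l| + τ) ^ (-μ) ≤ 12 ^ a * r ^ a * (1 + t + r) ^ (-μ) := by
  obtain ⟨hl₁, hl₂⟩ := abs_le.1 hl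
  have hlower : t - r ≤ |l| + τ := by linarith [le_abs_self l]
  have hle3 : |l| ≤ 3 * r := abs_le.2 ⟨by linarith, by linarith⟩
  have hleQ : |l| ≤ t - τ + r := abs_le.2 ⟨by linarith, by linarith⟩
  have hcase : 1 + t + r ≤ 4 * (1 + |l| + τ) ∨ 1 + t + r ≤ 4 * (3 * r) := by
    by_contra! h
    linarith [abs_nonneg l]
  calc |l| ^ a * (1 + |l| + τ) ^ (-μ) ≤ 4 ^ a * (3 * r) ^ a * (1 + t + r) ^ (-μ) :=
        rpow_mul_rpow_neg_le_of_le ha hμa (by norm_num) (abs_nonneg l) hle3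
          (by linarith) (by positivity) (by linarith) hcase
    _ = 12 ^ a * r ^ a * (1 + t + r) ^ (-μ) := by
        rw [mul_rpow (by norm_num) hr.le, ← mul_assoc, ← mul_rpow (by norm_num) (by norm_num)]
        norm_num

theorem stmt8 (a μ : ℝ) (ha : 0 < a) (hμ : μ ≤ a) :
    ∃ C : ℝ, 0 < C ∧ ∀ r t τ : ℝ, 0 < r → 0 < t → max (t - 2 * r) 0 ≤ τ → τ ≤ t →
      |t - τ + r| ^ a * (1 + |t - τ + r| + τ) ^ (-μ) ≤ C * r ^ a * (1 + t + r) ^ (-μ) ∧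
      |t - τ - r| ^ a * (1 + |t - τ - r| + τ) ^ (-μ) ≤ C * r ^ a * (1 + t + r) ^ (-μ) := by
  refine ⟨12 ^ a, by positivity, fun r t τ hr _ hτ hτt => ?_⟩
  have hτ0 : 0 ≤ τ := (le_max_right _ _).trans hτ
  have ht2r : t - 2 * r ≤ τ := (le_max_left _ _).trans hτ
  exact ⟨abs_rpow_mul_rpow_neg_le ha hμ hr hτ0 ht2r hτt (by simp [abs_of_pos hr]),
    abs_rpow_mul_rpow_neg_le ha hμ hr hτ0 ht2r hτt (by simp [abs_of_pos hr])⟩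
end
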